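/- arXiv:math/0503680 — 5 statements merged into one kernel-verified Lean document; each statement's English description precedes it below -/
import Mathlib

section
/- Let μ be an atomless Borel probability measure on the interval [0,1] and set M(x) = μ([0, x]). Let u, v : [0,1] → ℝ be Lebesgue integrable, let c_f, c_g ∈ ℝ, and define f(x) = c_f + ∫₀ˣ u(y) dy and g(x) = c_g + ∫₀ˣ v(y) dy. If ∫₀¹ f dμ = 0 and ∫₀¹ g dμ = 0, then ∫₀¹ f(x) g(x) dμ(x) = ∫₀¹ ∫₀¹ (M(min(y, z)) − M(y)·M(z)) · u(y) · v(z) dy dz. -/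
/-!
Put `k x y = F y - 1{x < y}` with `F` the distribution function of `μ`; for atomless `μ` this is
`1{y ≤ x} - μ [y, ∞)`, so `k x ·` integrates to `0` against `μ` in `x`. Hence `∫₀ˣ u` and
`x ↦ ∫ k x y u y dy` differ by a constant on `[0, 1]`, and as both have `μ`-mean zero when `f` does,
`f x = ∫ k x y u y dy` for `μ`-a.e. `x`; likewise for `g`. By Fubini, `∫ f g dμ` is then the
integral of `u y v z` against `∫ k x y k x z dμ(x)`, the covariance of the indicators of
`(-∞, y)` and `(-∞, z)` under `μ`, which is `F (min y z) - F y F z`.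
-/

open MeasureTheory Set ProbabilityTheory

noncomputable section

def cdfKernel (μ : Measure ℝ) (x y : ℝ) : ℝ := cdf μ y - (Iio y).indicator 1 x

section Kernel

variable (μ : Measure ℝ)

lemma abs_cdfKernel_le_one (x y : ℝ) : |cdfKernel μ x y| ≤ 1 := by
  have h0 := cdf_nonneg μ y
  have h1 := cdf_le_one μ y
  rw [abs_le]
  simp only [cdfKernel, indicator_apply, mem_Iio, Pi.one_apply]
  split_ifs <;> constructor <;> linarith

lemma measurable_cdfKernel : Measurable (Function.uncurry (cdfKernel μ)) := by
  have h : Function.uncurry (cdfKernel μ) = fun p => cdf μ p.2 - if p.1 < p.2 then 1 else 0 := by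
    funext p
    simp only [Function.uncurry, cdfKernel, indicator_apply, mem_Iio, Pi.one_apply]
  rw [h]
  exact ((cdf μ).mono.measurable.comp measurable_snd).sub
    (Measurable.ite (measurableSet_lt measurable_fst measurable_snd) measurable_const
      measurable_const)

lemma measurable_cdfKernel_right (x : ℝ) : Measurable (cdfKernel μ x) :=
  (measurable_cdfKernel μ).comp (measurable_const.prodMk measurable_id)

lemma Integrable.cdfKernel_mul {ν : Measure ℝ} {w : ℝ → ℝ} (hw : Integrable w ν) (x : ℝ) :
    Integrable (fun y => cdfKernel μ x y * w y) ν :=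
  hw.bdd_mul (measurable_cdfKernel_right μ x).aestronglyMeasurable
    (ae_of_all _ fun y => abs_cdfKernel_le_one μ x y)

lemma integrable_cdfKernel_mul_prod [IsFiniteMeasure μ] {ν : Measure ℝ} [SFinite ν]
    {w : ℝ → ℝ} (hw : Integrable w ν) :
    Integrable (Function.uncurry fun x y => cdfKernel μ x y * w y) (μ.prod ν) :=
  (hw.comp_snd μ).bdd_mul (measurable_cdfKernel μ).aestronglyMeasurable
    (ae_of_all _ fun p => abs_cdfKernel_le_one μ p.1 p.2)

lemma integrable_indicator_Iio_one [IsFiniteMeasure μ] (y : ℝ) :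
    Integrable ((Iio y).indicator (1 : ℝ → ℝ)) μ :=
  (integrable_const (1 : ℝ)).indicator measurableSet_Iio

end Kernel

section Covariance

variable (μ : Measure ℝ) [IsProbabilityMeasure μ] [NullSingletonClass μ]

lemma integral_indicator_Iio_one_eq_cdf (y : ℝ) :
    ∫ x, (Iio y).indicator (1 : ℝ → ℝ) x ∂μ = cdf μ y := by
  rw [integral_indicator_one measurableSet_Iio, measureReal_congr Iio_ae_eq_Iic, cdf_eq_real]

lemma integral_cdfKernel_left (y : ℝ) : ∫ x, cdfKernel μ x y ∂μ = 0 := by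
  simp only [cdfKernel]
  rw [integral_sub (integrable_const _) (integrable_indicator_Iio_one μ y),
    integral_indicator_Iio_one_eq_cdf, integral_const, probReal_univ, one_smul, sub_self]

lemma integral_cdfKernel_mul_cdfKernel (y z : ℝ) :
    ∫ x, cdfKernel μ x y * cdfKernel μ x z ∂μ = cdf μ (min y z) - cdf μ y * cdf μ z := by
  have hI := integrable_indicator_Iio_one μ
  have hexpand : ∀ x, cdfKernel μ x y * cdfKernel μ x z =
      (Iio (min y z)).indicator 1 x - cdf μ y * (Iio z).indicator 1 x
        - cdf μ z * (Iio y).indicator 1 x + cdf μ y * cdf μ z := by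
    intro x
    rw [← Iio_inter_Iio, inter_indicator_one, Pi.mul_apply, cdfKernel, cdfKernel]
    ring
  simp_rw [hexpand]
  rw [integral_add ?_ (integrable_const _), integral_sub ?_ ((hI _).const_mul _),
    integral_sub (hI _) ((hI _).const_mul _), integral_const_mul, integral_const_mul,
    integral_indicator_Iio_one_eq_cdf, integral_indicator_Iio_one_eq_cdf,
    integral_indicator_Iio_one_eq_cdf,
    integral_const, probReal_univ, one_smul]
  · ring
  · exact (hI _).sub ((hI _).const_mul _)
  · exact ((hI _).sub ((hI _).const_mul _)).sub ((hI _).const_mul _)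

lemma integral_integral_cdfKernel_mul {ν : Measure ℝ} [SFinite ν] {w : ℝ → ℝ}
    (hw : Integrable w ν) : ∫ x, ∫ y, cdfKernel μ x y * w y ∂ν ∂μ = 0 := by
  rw [integral_integral_swap (integrable_cdfKernel_mul_prod μ hw)]
  simp [integral_mul_const, integral_cdfKernel_left]

theorem integral_integral_cdfKernel_mul_mul {ν : Measure ℝ} [SFinite ν] {u v : ℝ → ℝ}
    (hu : Integrable u ν) (hv : Integrable v ν) :
    ∫ x, (∫ y, cdfKernel μ x y * u y ∂ν) * (∫ z, cdfKernel μ x z * v z ∂ν) ∂μ =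
      ∫ y, ∫ z, (cdf μ (min y z) - cdf μ y * cdf μ z) * u y * v z ∂ν ∂ν := by
  set H : ℝ × (ℝ × ℝ) → ℝ := fun q =>
    (cdfKernel μ q.1 q.2.1 * u q.2.1) * (cdfKernel μ q.1 q.2.2 * v q.2.2)
  have hH : Integrable H (μ.prod (ν.prod ν)) := by
    have hmeas : Measurable fun q : ℝ × (ℝ × ℝ) =>
        cdfKernel μ q.1 q.2.1 * cdfKernel μ q.1 q.2.2 := by
      have hk := measurable_cdfKernel μ
      exact (hk.comp (measurable_fst.prodMk (measurable_fst.comp measurable_snd))).mul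
        (hk.comp (measurable_fst.prodMk (measurable_snd.comp measurable_snd)))
    refine (((hu.mul_prod hv).comp_snd μ).bdd_mul (c := 1) hmeas.aestronglyMeasurable
      (ae_of_all _ fun q => ?_)).congr (ae_of_all _ fun q => by simp only [H]; ring)
    rw [norm_mul, Real.norm_eq_abs, Real.norm_eq_abs]
    exact mul_le_one₀ (abs_cdfKernel_le_one μ _ _) (abs_nonneg _) (abs_cdfKernel_le_one μ _ _)
  have hcov : ∀ p : ℝ × ℝ, ∫ x, H (x, p) ∂μ =
      (cdf μ (min p.1 p.2) - cdf μ p.1 * cdf μ p.2) * u p.1 * v p.2 := fun p => by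
    calc ∫ x, H (x, p) ∂μ
        = ∫ x, cdfKernel μ x p.1 * cdfKernel μ x p.2 * (u p.1 * v p.2) ∂μ := by
          simp only [H]; congr 1; funext x; ring
      _ = _ := by rw [integral_mul_const, integral_cdfKernel_mul_cdfKernel]; ring
  calc ∫ x, (∫ y, cdfKernel μ x y * u y ∂ν) * (∫ z, cdfKernel μ x z * v z ∂ν) ∂μ
      = ∫ x, ∫ p, H (x, p) ∂(ν.prod ν) ∂μ := integral_congr_ae <| ae_of_all _ fun x =>
        (integral_prod_mul (fun y => cdfKernel μ x y * u y) (fun z => cdfKernel μ x z * v z)).symm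
    _ = ∫ p, ∫ x, H (x, p) ∂μ ∂(ν.prod ν) := integral_integral_swap hH
    _ = ∫ p, (cdf μ (min p.1 p.2) - cdf μ p.1 * cdf μ p.2) * u p.1 * v p.2 ∂(ν.prod ν) := by
      simp only [hcov]
    _ = _ := integral_prod _ (by simpa only [hcov] using hH.integral_prod_right)

end Covariance

lemma intervalIntegral_eq_setIntegral_indicator_Iic {a b x : ℝ} (hx : x ∈ Icc a b) (w : ℝ → ℝ) :
    ∫ y in a..x, w y = ∫ y in Icc a b, (Iic x).indicator w y := by
  have hinter : Iic x ∩ Icc a b = Icc a x := by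
    ext y
    simp only [mem_inter_iff, mem_Iic, mem_Icc]
    constructor
    · rintro ⟨hyx, hay, -⟩; exact ⟨hay, hyx⟩
    · rintro ⟨hay, hyx⟩; exact ⟨hyx, hay, hyx.trans hx.2⟩
  rw [intervalIntegral.integral_of_le hx.1, integral_indicator measurableSet_Iic,
    Measure.restrict_restrict measurableSet_Iic, hinter, integral_Icc_eq_integral_Ioc]

lemma intervalIntegral_eq_integral_cdfKernel_mul_add (μ : Measure ℝ) [IsProbabilityMeasure μ]
    [NullSingletonClass μ] {a b x : ℝ} (hx : x ∈ Icc a b) {w : ℝ → ℝ}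
    (hw : IntegrableOn w (Icc a b)) :
    ∫ y in a..x, w y =
      (∫ y in Icc a b, cdfKernel μ x y * w y) + ∫ y in Icc a b, (1 - cdf μ y) * w y := by
  have hw' : Integrable (fun y => (1 - cdf μ y) * w y) (volume.restrict (Icc a b)) :=
    hw.bdd_mul (c := 1) (measurable_const.sub (cdf μ).mono.measurable).aestronglyMeasurable
      (ae_of_all _ fun y => by
        have := cdf_nonneg μ y; have := cdf_le_one μ y
        rw [Real.norm_eq_abs, abs_le]; constructor <;> linarith)
  rw [← integral_add (Integrable.cdfKernel_mul μ hw x) hw',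
    intervalIntegral_eq_setIntegral_indicator_Iic hx]
  congr 1
  funext y
  by_cases h : y ≤ x
  · simp [cdfKernel, h, not_lt.2 h]; ring
  · simp [cdfKernel, h, not_le.1 h]; ring

theorem ae_eq_integral_cdfKernel_mul_of_integral_eq_zero (μ : Measure ℝ) [IsProbabilityMeasure μ]
    [NullSingletonClass μ] {a b : ℝ} (hsupp : μ (Icc a b)ᶜ = 0) {w F : ℝ → ℝ} {c : ℝ}
    (hw : IntegrableOn w (Icc a b)) (hF : ∀ x, F x = c + ∫ y in a..x, w y)
    (hmean : ∫ x, F x ∂μ = 0) :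
    F =ᵐ[μ] fun x => ∫ y in Icc a b, cdfKernel μ x y * w y := by
  set C := c + ∫ y in Icc a b, (1 - cdf μ y) * w y with hCdef
  have hshift : ∀ᵐ x ∂μ, F x = (∫ y in Icc a b, cdfKernel μ x y * w y) + C := by
    filter_upwards [ae_iff.2 hsupp] with x hx
    rw [hF, intervalIntegral_eq_integral_cdfKernel_mul_add μ hx hw, hCdef]
    ring
  have hC : C = 0 := by
    have h := integral_congr_ae hshift
    have hG : Integrable (fun x => ∫ y in Icc a b, cdfKernel μ x y * w y) μ :=
      (integrable_cdfKernel_mul_prod μ hw).integral_prod_left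
    rw [hmean, integral_add hG (integrable_const C), integral_integral_cdfKernel_mul μ hw,
      integral_const, probReal_univ, one_smul, zero_add] at h
    exact h.symm
  filter_upwards [hshift] with x hx
  rw [hx, hC, add_zero]

lemma cdf_eq_measureReal_Icc (μ : Measure ℝ) [IsProbabilityMeasure μ] {a b : ℝ}
    (hsupp : μ (Icc a b)ᶜ = 0) (x : ℝ) : cdf μ x = μ.real (Icc a x) := by
  rw [cdf_eq_real, measureReal_def, measureReal_def, ← measure_inter_conull hsupp,
    ← measure_inter_conull (s := Icc a x) hsupp]
  congr 2
  ext y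
  simp only [mem_inter_iff, mem_Iic, mem_Icc]
  constructor
  · rintro ⟨hyx, hay, hyb⟩; exact ⟨⟨hay, hyx⟩, hay, hyb⟩
  · rintro ⟨⟨-, hyx⟩, hay, hyb⟩; exact ⟨hyx, hay, hyb⟩

end

/-- Covariance kernel identity: for an atomless Borel probability
measure `μ` on `[0,1]` with CDF `M`, and absolutely continuous `f = c_f + ∫₀˙ u`,
`g = c_g + ∫₀˙ v` with `∫ f dμ = ∫ g dμ = 0`,
`∫ f g dμ = ∫₀¹∫₀¹ (M(y∧z) − M(y)M(z)) u(y) v(z) dy dz`. -/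
theorem stmt_4 (μ : Measure ℝ) [IsProbabilityMeasure μ] [NullSingletonClass μ]
    (hμsupp : μ (Icc (0 : ℝ) 1)ᶜ = 0)
    (u v : ℝ → ℝ) (hu : IntegrableOn u (Icc (0 : ℝ) 1)) (hv : IntegrableOn v (Icc (0 : ℝ) 1))
    (cf cg : ℝ) (f g M : ℝ → ℝ)
    (hf : ∀ x, f x = cf + ∫ y in (0 : ℝ)..x, u y)
    (hg : ∀ x, g x = cg + ∫ y in (0 : ℝ)..x, v y)
    (hM : ∀ x, M x = (μ (Icc 0 x)).toReal)
    (hfmean : ∫ x, f x ∂μ = 0) (hgmean : ∫ x, g x ∂μ = 0) :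
    ∫ x, f x * g x ∂μ =
      ∫ y in Icc (0 : ℝ) 1, ∫ z in Icc (0 : ℝ) 1,
        (M (min y z) - M y * M z) * u y * v z := by
  have hMcdf : M = cdf μ :=
    funext fun x => by rw [hM, cdf_eq_measureReal_Icc μ hμsupp, measureReal_def]
  subst hMcdf
  rw [← integral_integral_cdfKernel_mul_mul μ hu hv]
  exact integral_congr_ae
    ((ae_eq_integral_cdfKernel_mul_of_integral_eq_zero μ hμsupp hu hf hfmean).mul
      (ae_eq_integral_cdfKernel_mul_of_integral_eq_zero μ hμsupp hv hg hgmean))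
end

section
/- Let H be a real inner product space, T : H → H a continuous linear map, f ∈ H, and γ ∈ [0, 1) such that ‖T^k f‖ ≤ γ^k · ‖f‖ for every integer k ≥ 0. Then for every N ≥ 1, | Σ_{m=1}^{N} Σ_{n=1}^{N} ⟨f, T^{|m−n|} f⟩ | ≤ ((1 + γ)/(1 − γ)) · N · ‖f‖². -/
open scoped RealInnerProductSpace

lemma aux_geom_dist_sum {γ : ℝ} (hγ0 : 0 ≤ γ) (hγ1 : γ < 1) (N m : ℕ)
    (hm1 : 1 ≤ m) (hmN : m ≤ N) :
    ∑ n ∈ Finset.Icc 1 N, γ ^ (Nat.dist m n) ≤ (1 + γ) / (1 - γ) := by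
  have hsplit : Finset.Icc 1 N = Finset.Icc 1 m ∪ Finset.Ioc m N := by
    ext x; simp [Finset.mem_union]; omega
  have hdisj : Disjoint (Finset.Icc 1 m) (Finset.Ioc m N) := by
    simp [Finset.disjoint_left]
    intro a _ ha hma
    omega
  rw [hsplit, Finset.sum_union hdisj]
  have h1 : ∑ n ∈ Finset.Icc 1 m, γ ^ (Nat.dist m n) = ∑ k ∈ Finset.range m, γ ^ k := by
    apply Finset.sum_nbij' (fun n => m - n) (fun k => m - k)
    · intro n hn; simp at hn ⊢; omega
    · intro k hk; simp at hk ⊢; omega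
    · intro n hn; simp at hn; omega
    · intro k hk; simp at hk; omega
    · intro n hn; simp at hn
      congr 1
      rw [Nat.dist_eq_sub_of_le_right hn.2]
  have h2 : ∑ n ∈ Finset.Ioc m N, γ ^ (Nat.dist m n) = ∑ k ∈ Finset.Ico 1 (N - m + 1), γ ^ k := by
    apply Finset.sum_nbij' (fun n => n - m) (fun k => k + m)
    · intro n hn; simp at hn ⊢; omega
    · intro k hk; simp at hk ⊢; omega
    · intro n hn; simp at hn; omega
    · intro k hk; simp at hk; omega
    · intro n hn; simp at hn
      congr 1
      rw [Nat.dist_eq_sub_of_le hn.1.le]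
  rw [h1, h2]
  have g1 : ∑ k ∈ Finset.range m, γ ^ k ≤ 1 / (1 - γ) := by
    have := geom_sum_Ico_le_of_lt_one hγ0 hγ1 (m := 0) (n := m)
    simpa using this
  have g2 : ∑ k ∈ Finset.Ico 1 (N - m + 1), γ ^ k ≤ γ / (1 - γ) := by
    have := geom_sum_Ico_le_of_lt_one hγ0 hγ1 (m := 1) (n := N - m + 1)
    simpa using this
  have : 1 / (1 - γ) + γ / (1 - γ) = (1 + γ) / (1 - γ) := by ring
  linarith

/-- Covariance estimate for powers of a contraction on the cyclic
subspace generated by `f`: if `‖T^k f‖ ≤ γ^k ‖f‖` for all `k ≥ 0` with `0 ≤ γ < 1`,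
then `|Σ_{m=1}^N Σ_{n=1}^N ⟪f, T^{|m−n|} f⟫| ≤ ((1+γ)/(1−γ)) N ‖f‖²`. -/
theorem stmt_7 {H : Type*} [NormedAddCommGroup H] [InnerProductSpace ℝ H]
    (T : H →L[ℝ] H) (f : H) (γ : ℝ) (hγ0 : 0 ≤ γ) (hγ1 : γ < 1)
    (hT : ∀ k : ℕ, ‖(T ^ k) f‖ ≤ γ ^ k * ‖f‖) (N : ℕ) (hN : 1 ≤ N) :
    |∑ m ∈ Finset.Icc 1 N, ∑ n ∈ Finset.Icc 1 N, ⟪f, (T ^ (Nat.dist m n)) f⟫| ≤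
      (1 + γ) / (1 - γ) * N * ‖f‖ ^ 2 := by
  have habs : ∀ d : ℕ, |⟪f, (T ^ d) f⟫| ≤ γ ^ d * ‖f‖ ^ 2 := by
    intro d
    calc |⟪f, (T ^ d) f⟫| ≤ ‖f‖ * ‖(T ^ d) f‖ := abs_real_inner_le_norm f _
    _ ≤ ‖f‖ * (γ ^ d * ‖f‖) := by
        exact mul_le_mul_of_nonneg_left (hT d) (norm_nonneg f)
    _ = γ ^ d * ‖f‖ ^ 2 := by ring
  calc |∑ m ∈ Finset.Icc 1 N, ∑ n ∈ Finset.Icc 1 N, ⟪f, (T ^ (Nat.dist m n)) f⟫|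
      ≤ ∑ m ∈ Finset.Icc 1 N, ∑ n ∈ Finset.Icc 1 N, γ ^ (Nat.dist m n) * ‖f‖ ^ 2 := by
        refine (Finset.abs_sum_le_sum_abs _ _).trans (Finset.sum_le_sum fun m _ => ?_)
        exact (Finset.abs_sum_le_sum_abs _ _).trans
          (Finset.sum_le_sum fun n _ => habs _)
    _ ≤ ∑ m ∈ Finset.Icc 1 N, (1 + γ) / (1 - γ) * ‖f‖ ^ 2 := by
        refine Finset.sum_le_sum fun m hm => ?_
        simp only [Finset.mem_Icc] at hm
        rw [← Finset.sum_mul]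
        exact mul_le_mul_of_nonneg_right
          (aux_geom_dist_sum hγ0 hγ1 N m hm.1 hm.2) (sq_nonneg _)
    _ = (1 + γ) / (1 - γ) * N * ‖f‖ ^ 2 := by
        rw [Finset.sum_const, Nat.card_Icc]
        simp
        ring
end

section
/- Let (X, 𝒜, m) be a measure space and let p, q : X → ℝ be measurable and integrable with p(x) > 0 for m-almost every x, |q(x) − p(x)| ≤ p(x)/2 for m-almost every x, and ∫ p dm = ∫ q dm. Then the function p · log(p/q) is integrable and ∫ p(x) · log( p(x)/q(x) ) dm(x) ≤ ∫ (q(x) − p(x))² / p(x) dm(x). -/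
/-!
Write `t = q / p`, which lies in `[1/2, 3/2]`. The second-order bound
`log t ≥ (t - 1) - (t - 1)²` for `t ≥ 1/2` gives pointwise
`p log (p / q) ≤ (p - q) + (q - p)² / p`, and the linear term integrates to zero because
`∫ p = ∫ q`. Integrability comes from `p - q ≤ p log (p / q)` and `(q - p)² / p ≤ p / 4`.
-/

open MeasureTheory Real

theorem Real.sub_one_sub_sq_le_log {t : ℝ} (ht : 1 / 2 ≤ t) :
    t - 1 - (t - 1) ^ 2 ≤ log t := by
  set y := 1 - t + (1 - t) ^ 2
  -- bounding `exp y` below by a Taylor polynomial turns this into a polynomial inequality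
  have h_one_le : 1 ≤ t * exp y := by
    rcases le_total t 1 with h | h
    · have hy : 0 ≤ y := by positivity
      calc 1 ≤ t * (1 + y + y ^ 2 / 2) := by
            nlinarith [mul_nonneg (sub_nonneg.2 h) (sub_nonneg.2 ht)]
        _ ≤ t * exp y := by gcongr; exact quadratic_le_exp_of_nonneg hy
    · calc 1 ≤ t * (y + 1) := by nlinarith [pow_nonneg (sub_nonneg.2 h) 3]
        _ ≤ t * exp y := by gcongr; exact add_one_le_exp y
  have h_log := log_nonneg h_one_le
  rw [log_mul (by positivity) (exp_pos y).ne', log_exp] at h_log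
  linarith

section Pointwise

variable {a b : ℝ}

theorem mul_log_div_le_of_abs_sub_le (h : |b - a| ≤ a / 2) :
    a * log (a / b) ≤ a - b + (b - a) ^ 2 / a := by
  obtain ⟨h_lo, h_hi⟩ := abs_le.1 h
  rcases (show 0 ≤ a by linarith).eq_or_lt with rfl | ha
  · obtain rfl : b = 0 := by simpa using h
    simp
  have ht : 1 / 2 ≤ b / a := by rw [le_div_iff₀ ha]; linarith
  have key := mul_le_mul_of_nonneg_left (sub_one_sub_sq_le_log ht) ha.le
  have h_expand : a * (b / a - 1 - (b / a - 1) ^ 2) = b - a - (b - a) ^ 2 / a := by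
    field_simp
  rw [h_expand] at key
  rw [← inv_div, log_inv]
  linarith

theorem sub_le_mul_log_div_of_abs_sub_le (h : |b - a| ≤ a / 2) : a - b ≤ a * log (a / b) := by
  obtain ⟨h_lo, h_hi⟩ := abs_le.1 h
  rcases (show 0 ≤ a by linarith).eq_or_lt with rfl | ha
  · obtain rfl : b = 0 := by simpa using h
    simp
  have hb : 0 < b := by linarith
  have key := mul_le_mul_of_nonneg_left (one_sub_inv_le_log_of_pos (div_pos ha hb)) ha.le
  rwa [inv_div, mul_one_sub, mul_div_cancel₀ _ ha.ne'] at key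

theorem sq_sub_div_le_of_abs_sub_le (h : |b - a| ≤ a / 2) : (b - a) ^ 2 / a ≤ a / 4 := by
  have ha : 0 ≤ a := by linarith [abs_nonneg (b - a)]
  calc (b - a) ^ 2 / a ≤ (a / 2) ^ 2 / a :=
        div_le_div_of_nonneg_right (sq_le_sq' (abs_le.1 h).1 (abs_le.1 h).2) ha
    _ = a / 4 := by rcases ha.eq_or_lt with rfl | ha <;> field_simp <;> ring

end Pointwise

section Integrability

variable {X : Type*} [MeasurableSpace X] {m : Measure X} {p q : X → ℝ}

theorem integrable_sq_sub_div (hp : Integrable p m) (hq : AEMeasurable q m)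
    (hclose : ∀ᵐ x ∂m, |q x - p x| ≤ p x / 2) :
    Integrable (fun x => (q x - p x) ^ 2 / p x) m := by
  refine (hp.div_const 4).mono' ((hq.sub hp.aemeasurable).pow_const 2 |>.div
    hp.aemeasurable).aestronglyMeasurable ?_
  filter_upwards [hclose] with x hx
  rw [norm_of_nonneg (div_nonneg (sq_nonneg _) (by linarith [abs_nonneg (q x - p x)]))]
  exact sq_sub_div_le_of_abs_sub_le hx

theorem integrable_mul_log_div (hp : Integrable p m) (hq : Integrable q m)
    (hclose : ∀ᵐ x ∂m, |q x - p x| ≤ p x / 2) :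
    Integrable (fun x => p x * log (p x / q x)) m := by
  refine Integrable.mono' (g := fun x => |q x - p x| + (q x - p x) ^ 2 / p x)
    ((hq.sub hp).abs.add (integrable_sq_sub_div hp hq.aemeasurable hclose))
    (hp.aemeasurable.mul (hp.aemeasurable.div hq.aemeasurable).log).aestronglyMeasurable ?_
  filter_upwards [hclose] with x hx
  rw [norm_eq_abs, abs_le]
  constructor
  · linarith [sub_le_mul_log_div_of_abs_sub_le hx, le_abs_self (q x - p x),
      div_nonneg (sq_nonneg (q x - p x)) (by linarith [abs_nonneg (q x - p x)] : 0 ≤ p x)]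
  · linarith [mul_log_div_le_of_abs_sub_le hx, neg_abs_le (q x - p x)]

end Integrability

theorem stmt_9_general {X : Type*} [MeasurableSpace X] (m : Measure X) (p q : X → ℝ)
    (hpi : Integrable p m) (hqi : Integrable q m)
    (hclose : ∀ᵐ x ∂m, |q x - p x| ≤ p x / 2)
    (hmass : ∫ x, p x ∂m = ∫ x, q x ∂m) :
    Integrable (fun x => p x * Real.log (p x / q x)) m ∧
      ∫ x, p x * Real.log (p x / q x) ∂m ≤ ∫ x, (q x - p x) ^ 2 / p x ∂m := by
  have h_kl := integrable_mul_log_div hpi hqi hclose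
  have h_chi := integrable_sq_sub_div hpi hqi.aemeasurable hclose
  refine ⟨h_kl, ?_⟩
  calc ∫ x, p x * log (p x / q x) ∂m
      ≤ ∫ x, (p x - q x) + (q x - p x) ^ 2 / p x ∂m :=
        integral_mono_ae h_kl (Integrable.add (f := fun x => p x - q x) (hpi.sub hqi) h_chi)
          (hclose.mono fun x hx => mul_log_div_le_of_abs_sub_le hx)
    _ = ∫ x, (q x - p x) ^ 2 / p x ∂m := by
        rw [integral_add (f := fun x => p x - q x) (hpi.sub hqi) h_chi, integral_sub hpi hqi,
          hmass, sub_self, zero_add]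

/-- Kullback–Leibler bound: for densities `p, q` with `p > 0` a.e.,
`|q − p| ≤ p/2` a.e. and `∫ p = ∫ q`, the function `p log(p/q)` is integrable and
`∫ p log(p/q) ≤ ∫ (q − p)²/p`. -/
theorem stmt_9 {X : Type*} [MeasurableSpace X] (m : Measure X) (p q : X → ℝ)
    (hpm : Measurable p) (hqm : Measurable q)
    (hpi : Integrable p m) (hqi : Integrable q m)
    (hppos : ∀ᵐ x ∂m, 0 < p x)
    (hclose : ∀ᵐ x ∂m, |q x - p x| ≤ p x / 2)
    (hmass : ∫ x, p x ∂m = ∫ x, q x ∂m) :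
    Integrable (fun x => p x * Real.log (p x / q x)) m ∧
      ∫ x, p x * Real.log (p x / q x) ∂m ≤ ∫ x, (q x - p x) ^ 2 / p x ∂m :=
  stmt_9_general m p q hpi hqi hclose hmass
end

section
/- Let σ, b : [0,1] → ℝ be continuous with σ(x) > 0 for all x, let C₀ > 0, and define μ(x) = 2·C₀·σ(x)^{-2}·exp( ∫₀ˣ 2·b(y)·σ(y)^{-2} dy ) and S(x) = σ(x)²·μ(x)/2. Let ν ∈ ℝ and let u : [0,1] → ℝ be twice differentiable with u'(0) = 0, such that S·u' is differentiable with (S·u')'(x) = ν·u(x)·μ(x) for all x ∈ [0,1]. Then at every point x ∈ [0,1] with u'(x) ≠ 0, b(x) = ν·( u(x)·u'(x)·μ(x) − u''(x)·∫₀ˣ u(y)·μ(y) dy ) / ( u'(x)²·μ(x) ). -/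
/-! Since `S = C₀ exp (∫₀ˣ 2 b σ⁻²)`, one has `S' = b μ`, so the eigen-equation expands by the
product rule to `ν u μ = b μ u' + S u''`. Integrating it from `0` with `u'(0) = 0` gives the flux
identity `S u' = ν ∫₀ˣ u μ`. Multiplying the first relation by `u'` and substituting the second for
`S u' u''` leaves `b μ u'² = ν (u u' μ - u'' ∫₀ˣ u μ)`. -/

open Set intervalIntegral

section Calculus

variable {f F : ℝ → ℝ} {a b c x : ℝ}

theorem hasDerivWithinAt_integral_Icc (hf : ContinuousOn f (Icc a b)) (hc : c ∈ Icc a b)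
    (hx : x ∈ Icc a b) :
    HasDerivWithinAt (fun t => ∫ y in c..t, f y) (f x) (Icc a b) x := by
  have : Fact (x ∈ Icc a b) := ⟨hx⟩
  exact integral_hasDerivWithinAt_right (hf.mono (uIcc_subset_Icc hc hx)).intervalIntegrable
    (hf.stronglyMeasurableAtFilter_nhdsWithin measurableSet_Icc x) (hf x hx)

theorem integral_eq_sub_of_hasDerivWithinAt_Icc
    (hF : ∀ y ∈ Icc a b, HasDerivWithinAt F (f y) (Icc a b) y) (hf : ContinuousOn f (Icc a b))
    (hx : x ∈ Icc a b) :
    ∫ y in a..x, f y = F x - F a := by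
  have hsub : Icc a x ⊆ Icc a b := Icc_subset_Icc_right hx.2
  refine integral_eq_sub_of_hasDeriv_right_of_le hx.1
    (fun y hy => (hF y (hsub hy)).continuousWithinAt.mono hsub) (fun y hy => ?_)
    ((hf.mono hsub).intervalIntegrable_of_Icc hx.1)
  have hy_mem : Icc a b ∈ nhds y := Icc_mem_nhds hy.1 (hy.2.trans_le hx.2)
  exact ((hF y (hsub (Ioo_subset_Icc_self hy))).hasDerivAt hy_mem).hasDerivWithinAt

end Calculus

section InvariantDensity

variable {σ b μ : ℝ → ℝ} {C₀ x : ℝ}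

theorem continuousOn_two_mul_mul_zpow_neg_two (hσc : ContinuousOn σ (Icc (0 : ℝ) 1))
    (hbc : ContinuousOn b (Icc (0 : ℝ) 1)) (hσpos : ∀ x ∈ Icc (0 : ℝ) 1, 0 < σ x) :
    ContinuousOn (fun y => 2 * b y * σ y ^ (-2 : ℤ)) (Icc (0 : ℝ) 1) :=
  (continuousOn_const.mul hbc).mul (hσc.zpow₀ _ fun y hy => Or.inl (hσpos y hy).ne')

variable (hσc : ContinuousOn σ (Icc (0 : ℝ) 1)) (hbc : ContinuousOn b (Icc (0 : ℝ) 1))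
  (hσpos : ∀ x ∈ Icc (0 : ℝ) 1, 0 < σ x)
  (hμ : ∀ x, μ x = 2 * C₀ * σ x ^ (-2 : ℤ) *
    Real.exp (∫ y in (0 : ℝ)..x, 2 * b y * σ y ^ (-2 : ℤ)))
include hσc hbc hσpos hμ

theorem continuousOn_invariantDensity : ContinuousOn μ (Icc (0 : ℝ) 1) := by
  have hint := continuousOn_two_mul_mul_zpow_neg_two hσc hbc hσpos
  have hexp : ContinuousOn (fun x => ∫ y in (0 : ℝ)..x, 2 * b y * σ y ^ (-2 : ℤ)) (Icc 0 1) :=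
    fun x hx =>
      (hasDerivWithinAt_integral_Icc hint (left_mem_Icc.2 zero_le_one) hx).continuousWithinAt
  rw [funext hμ]
  exact (continuousOn_const.mul (hσc.zpow₀ _ fun y hy => Or.inl (hσpos y hy).ne')).mul hexp.rexp

theorem hasDerivWithinAt_half_sq_mul_invariantDensity (hx : x ∈ Icc (0 : ℝ) 1) :
    HasDerivWithinAt (fun t => σ t ^ 2 * μ t / 2) (b x * μ x) (Icc (0 : ℝ) 1) x := by
  have hspeed : ∀ t ∈ Icc (0 : ℝ) 1, σ t ^ 2 * μ t / 2 =
      C₀ * Real.exp (∫ y in (0 : ℝ)..t, 2 * b y * σ y ^ (-2 : ℤ)) := fun t ht => by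
    rw [hμ, zpow_neg, zpow_two]
    field_simp [(hσpos t ht).ne']
  have hint := continuousOn_two_mul_mul_zpow_neg_two hσc hbc hσpos
  have hexp :=
    (hasDerivWithinAt_integral_Icc hint (left_mem_Icc.2 zero_le_one) hx).exp.const_mul C₀
  refine (hexp.congr hspeed (hspeed x hx)).congr_deriv ?_
  rw [hμ]
  ring

end InvariantDensity

/-- Identification of the drift coefficient from an eigenpair:
if `(S u')' = ν u μ` on `[0,1]` with `u'(0) = 0`, then wherever `u'(x) ≠ 0`,
`b(x) = ν (u u' μ − u'' ∫₀ˣ u μ)/(u'² μ)(x)`. -/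
theorem stmt_14 (σ b : ℝ → ℝ) (hσc : ContinuousOn σ (Icc (0 : ℝ) 1))
    (hbc : ContinuousOn b (Icc (0 : ℝ) 1)) (hσpos : ∀ x ∈ Icc (0 : ℝ) 1, 0 < σ x)
    (C₀ : ℝ) (hC₀ : 0 < C₀) (μ S : ℝ → ℝ)
    (hμ : ∀ x, μ x = 2 * C₀ * (σ x) ^ (-2 : ℤ) *
      Real.exp (∫ y in (0 : ℝ)..x, 2 * b y * (σ y) ^ (-2 : ℤ)))
    (hS : ∀ x, S x = σ x ^ 2 * μ x / 2)
    (ν : ℝ) (u u' u'' : ℝ → ℝ)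
    (hu' : ∀ x ∈ Icc (0 : ℝ) 1, HasDerivWithinAt u (u' x) (Icc (0 : ℝ) 1) x)
    (hu'' : ∀ x ∈ Icc (0 : ℝ) 1, HasDerivWithinAt u' (u'' x) (Icc (0 : ℝ) 1) x)
    (hu'0 : u' 0 = 0)
    (heig : ∀ x ∈ Icc (0 : ℝ) 1,
      HasDerivWithinAt (fun t => S t * u' t) (ν * u x * μ x) (Icc (0 : ℝ) 1) x) :
    ∀ x ∈ Icc (0 : ℝ) 1, u' x ≠ 0 →
      b x = ν * (u x * u' x * μ x - u'' x * ∫ y in (0 : ℝ)..x, u y * μ y) /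
        (u' x ^ 2 * μ x) := by
  obtain rfl : S = fun x => σ x ^ 2 * μ x / 2 := funext hS
  intro x hx hu'x
  have hpointwise : ν * u x * μ x = b x * μ x * u' x + (σ x ^ 2 * μ x / 2) * u'' x :=
    (uniqueDiffOn_Icc one_pos x hx).eq_deriv _ (heig x hx)
      ((hasDerivWithinAt_half_sq_mul_invariantDensity hσc hbc hσpos hμ hx).mul (hu'' x hx))
  have hflux : (σ x ^ 2 * μ x / 2) * u' x = ν * ∫ y in (0 : ℝ)..x, u y * μ y := by
    have hcont : ContinuousOn (fun y => ν * u y * μ y) (Icc (0 : ℝ) 1) :=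
      (continuousOn_const.mul fun y hy => (hu' y hy).continuousWithinAt).mul
        (continuousOn_invariantDensity hσc hbc hσpos hμ)
    have hFTC := integral_eq_sub_of_hasDerivWithinAt_Icc heig hcont hx
    simp only [hu'0, mul_zero, sub_zero] at hFTC
    rw [← integral_const_mul, ← hFTC]
    simp only [mul_assoc]
  have hμx : 0 < μ x := by
    rw [hμ]
    exact mul_pos (mul_pos (by positivity) (zpow_pos (hσpos x hx) _)) (Real.exp_pos _)
  rw [eq_div_iff (by positivity)]
  linear_combination (-(u' x)) * hpointwise - u'' x * hflux
end

section
/- Let S : [0,1] → ℝ be continuous with S(v) > 0 for all v, and let g : [0,1] → ℝ be continuous with ∫₀¹ g(y) dy = 0. Define u(x) = ∫₀¹ ( ∫_y¹ S(v)^{-1}·( v − 𝟙_{[x,1]}(v) ) dv ) · g(y) dy for x ∈ [0,1], where 𝟙_{[x,1]}(v) = 1 if v ≥ x and 0 otherwise. Then u is differentiable on [0,1] with S(x)·u'(x) = ∫₀ˣ g(y) dy for all x ∈ [0,1]; in particular u'(0) = 0 and u'(1) = 0. -/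
open Set MeasureTheory

/-!
Splitting the kernel as `∫_y¹ v/S − ∫_{max x y}¹ 1/S` gives
`u x = C − ∫₀¹ F (max x y) g y dy` with `F t = ∫_t¹ 1/S`. Cutting the last integral at `y = x`
turns it into `F x G x + ∫_x¹ F g` with `G x = ∫₀ˣ g`; by the product rule and the fundamental
theorem of calculus the terms `± F x g x` cancel, leaving `u' = G / S`. The Neumann condition at
`1` is the mean-zero hypothesis `G 1 = 0`.
-/

section

variable {a b x : ℝ}

theorem hasDerivWithinAt_integral_left_of_continuousOn {f : ℝ → ℝ}
    (hf : ContinuousOn f (Icc a b)) (hx : x ∈ Icc a b) :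
    HasDerivWithinAt (fun t => ∫ y in t..b, f y) (-f x) (Icc a b) x :=
  have : Fact (x ∈ Icc a b) := ⟨hx⟩
  intervalIntegral.integral_hasDerivWithinAt_left
    ((hf.mono (uIcc_subset_Icc hx (right_mem_Icc.2 (hx.1.trans hx.2)))).intervalIntegrable)
    (hf.stronglyMeasurableAtFilter_nhdsWithin measurableSet_Icc x) (hf x hx)

theorem hasDerivWithinAt_integral_right_of_continuousOn {f : ℝ → ℝ}
    (hf : ContinuousOn f (Icc a b)) (hx : x ∈ Icc a b) :
    HasDerivWithinAt (fun t => ∫ y in a..t, f y) (f x) (Icc a b) x :=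
  have : Fact (x ∈ Icc a b) := ⟨hx⟩
  intervalIntegral.integral_hasDerivWithinAt_right
    ((hf.mono (uIcc_subset_Icc (left_mem_Icc.2 (hx.1.trans hx.2)) hx)).intervalIntegrable)
    (hf.stronglyMeasurableAtFilter_nhdsWithin measurableSet_Icc x) (hf x hx)

theorem integral_ite_le_eq_integral_max {E : Type*} [NormedAddCommGroup E] [NormedSpace ℝ E]
    {f : ℝ → E} {y : ℝ} (hy : y ≤ b) (hx : x ≤ b) :
    ∫ v in y..b, (if x ≤ v then f v else 0) = ∫ v in max x y..b, f v := by
  have hind : (fun v => if x ≤ v then f v else 0) = (Ici x).indicator f := by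
    ext v; simp [indicator_apply]
  -- `Ioc y b ∩ Ioi x = Ioc (max x y) b`, and `Ioi x` differs from `Ici x` by a null set
  rw [hind, intervalIntegral.integral_of_le hy, intervalIntegral.integral_of_le (max_le hx hy),
    setIntegral_indicator measurableSet_Ici,
    setIntegral_congr_set (ae_eq_refl _ |>.inter Ioi_ae_eq_Ici.symm)]
  congr 2
  ext v; simp only [mem_inter_iff, mem_Ioc, mem_Ioi, max_lt_iff]; tauto

theorem integral_mul_sub_ite {f : ℝ → ℝ} {y : ℝ} (hf : IntervalIntegrable f volume y b)
    (hy : y ≤ b) (hx : x ≤ b) :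
    ∫ v in y..b, f v * (v - if x ≤ v then 1 else 0) =
      (∫ v in y..b, f v * v) - ∫ v in max x y..b, f v := by
  have hite : IntervalIntegrable (fun v => if x ≤ v then f v else 0) volume y b := by
    simp only [← indicator_apply, ← mem_Ici]
    exact (intervalIntegrable_iff.1 hf).indicator measurableSet_Ici |> intervalIntegrable_iff.2
  rw [← integral_ite_le_eq_integral_max hy hx,
    ← intervalIntegral.integral_sub (hf.mul_continuousOn (continuousOn_id' _)) hite]
  congr 1; ext v; split_ifs <;> ring

variable {F g : ℝ → ℝ}

theorem intervalIntegrable_max_mul (hF : ContinuousOn F (Icc a b))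
    (hg : IntervalIntegrable g volume a b) (hab : a ≤ b) (hx : x ≤ b) :
    IntervalIntegrable (fun y => F (max x y) * g y) volume a b := by
  refine hg.continuousOn_mul (hF.comp (continuous_const.max continuous_id).continuousOn ?_)
  intro y hy
  rw [uIcc_of_le hab] at hy
  exact ⟨hy.1.trans (le_max_right _ _), max_le hx hy.2⟩

theorem integral_max_mul (hF : ContinuousOn F (Icc a b)) (hg : IntervalIntegrable g volume a b)
    (hx : x ∈ Icc a b) :
    ∫ y in a..b, F (max x y) * g y = F x * (∫ y in a..x, g y) + ∫ y in x..b, F y * g y := by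
  have hab := hx.1.trans hx.2
  have hint := intervalIntegrable_max_mul hF hg hab hx.2
  rw [← intervalIntegral.integral_add_adjacent_intervals (hint.mono_set (uIcc_subset_uIcc_left (by
      rw [uIcc_of_le hab]; exact hx))) (hint.mono_set (uIcc_subset_uIcc_right (by
      rw [uIcc_of_le hab]; exact hx))), ← intervalIntegral.integral_const_mul]
  congr 1
  · refine intervalIntegral.integral_congr fun y hy => ?_
    rw [uIcc_of_le hx.1] at hy
    simp only [max_eq_left hy.2]
  · refine intervalIntegral.integral_congr fun y hy => ?_
    rw [uIcc_of_le hx.2] at hy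
    simp only [max_eq_right hy.1]

theorem hasDerivWithinAt_integral_max_mul {F' : ℝ → ℝ}
    (hF : ∀ t ∈ Icc a b, HasDerivWithinAt F (F' t) (Icc a b) t) (hg : ContinuousOn g (Icc a b))
    (hx : x ∈ Icc a b) :
    HasDerivWithinAt (fun t => ∫ y in a..b, F (max t y) * g y)
      (F' x * ∫ y in a..x, g y) (Icc a b) x := by
  have hFc : ContinuousOn F (Icc a b) := fun t ht => (hF t ht).continuousWithinAt
  have hg' : IntervalIntegrable g volume a b := hg.intervalIntegrable_of_Icc (hx.1.trans hx.2)
  have hsplit := ((hF x hx).mul (hasDerivWithinAt_integral_right_of_continuousOn hg hx)).add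
    (hasDerivWithinAt_integral_left_of_continuousOn (hFc.mul hg) hx)
  exact (hsplit.congr_deriv (by simp only [Pi.mul_apply]; ring)).congr
    (fun t ht => integral_max_mul hFc hg' ht) (integral_max_mul hFc hg' hx)

theorem integral_kernel_mul {f : ℝ → ℝ} (hf : ContinuousOn f (Icc a b))
    (hg : IntervalIntegrable g volume a b) (hab : a ≤ b) (hx : x ≤ b) :
    ∫ y in a..b, (∫ v in y..b, f v * (v - if x ≤ v then 1 else 0)) * g y =
      (∫ y in a..b, (∫ v in y..b, f v * v) * g y) -
        ∫ y in a..b, (∫ v in max x y..b, f v) * g y := by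
  have hA : ContinuousOn (fun y => ∫ v in y..b, f v * v) (Icc a b) := fun t ht =>
    (hasDerivWithinAt_integral_left_of_continuousOn (hf.mul continuousOn_id) ht).continuousWithinAt
  have hF : ContinuousOn (fun t => ∫ v in t..b, f v) (Icc a b) := fun t ht =>
    (hasDerivWithinAt_integral_left_of_continuousOn hf ht).continuousWithinAt
  rw [← intervalIntegral.integral_sub (hg.continuousOn_mul (hA.mono (uIcc_of_le hab).subset))
    (intervalIntegrable_max_mul hF hg hab hx)]
  refine intervalIntegral.integral_congr fun y hy => ?_
  rw [uIcc_of_le hab] at hy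
  have hfy : IntervalIntegrable f volume y b :=
    (hf.mono (uIcc_subset_Icc hy (right_mem_Icc.2 hab))).intervalIntegrable
  rw [integral_mul_sub_ite hfy hy.2 hx, sub_mul]

end

/-- Explicit inverse of the Neumann divergence-form generator:
for continuous `S > 0` and continuous mean-zero `g`, the function
`u(x) = ∫₀¹ (∫_y¹ S(v)⁻¹(v − 𝟙_{[x,1]}(v)) dv) g(y) dy` is differentiable with
`S(x) u'(x) = ∫₀ˣ g`, and in particular `u'(0) = u'(1) = 0`. -/
theorem stmt_15 (S g : ℝ → ℝ) (hSc : ContinuousOn S (Icc (0 : ℝ) 1))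
    (hSpos : ∀ v ∈ Icc (0 : ℝ) 1, 0 < S v) (hgc : ContinuousOn g (Icc (0 : ℝ) 1))
    (hgmean : ∫ y in (0 : ℝ)..1, g y = 0) (u : ℝ → ℝ)
    (hu : ∀ x, u x = ∫ y in (0 : ℝ)..1,
      (∫ v in y..(1 : ℝ), (S v)⁻¹ * (v - if x ≤ v then (1 : ℝ) else 0)) * g y) :
    ∃ u' : ℝ → ℝ,
      (∀ x ∈ Icc (0 : ℝ) 1, HasDerivWithinAt u (u' x) (Icc (0 : ℝ) 1) x) ∧
      (∀ x ∈ Icc (0 : ℝ) 1, S x * u' x = ∫ y in (0 : ℝ)..x, g y) ∧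
      u' 0 = 0 ∧ u' 1 = 0 := by
  set h : ℝ → ℝ := fun v => (S v)⁻¹
  have hh : ContinuousOn h (Icc 0 1) := hSc.inv₀ fun v hv => (hSpos v hv).ne'
  have hF : ∀ t ∈ Icc (0 : ℝ) 1, HasDerivWithinAt (fun t => ∫ v in t..1, h v) (-h t) (Icc 0 1) t :=
    fun t ht => hasDerivWithinAt_integral_left_of_continuousOn hh ht
  set C := ∫ y in (0 : ℝ)..1, (∫ v in y..1, h v * v) * g y
  have hrep : ∀ x ∈ Icc (0 : ℝ) 1,
      u x = C - ∫ y in (0 : ℝ)..1, (∫ v in max x y..1, h v) * g y := fun x hx =>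
    (hu x).trans
      (integral_kernel_mul hh (hgc.intervalIntegrable_of_Icc zero_le_one) zero_le_one hx.2)
  refine ⟨fun x => h x * ∫ y in (0 : ℝ)..x, g y, fun x hx => ?_, fun x hx => ?_, by simp,
    by simp [hgmean]⟩
  · exact (((hasDerivWithinAt_integral_max_mul hF hgc hx).const_sub C).congr_deriv
      (by ring)).congr hrep (hrep x hx)
  · exact mul_inv_cancel_left₀ (hSpos x hx).ne' _
end
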